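/- Let X be a Banach space, T a bounded linear operator on X with relatively weakly compact orbits, and K ⊆ X a relatively norm compact subset. Then the set Orb(K) = {Tⁿ x : n ∈ ℕ, x ∈ K} is relatively compact in the weak topology of X. -/

import Mathlib

/-!
Weakly compact sets are norm bounded, so the orbits of `T` are bounded and Banach–Steinhaus gives
`‖Tⁿ‖ ≤ M` for all `n`. Follow an ultrafilter on the pairs `(n, x)` with `x ∈ K`: the base points
`x` converge in norm to some `x₀` (as `closure K` is compact), the points `Tⁿ x₀` converge weakly
inside the weakly compact orbit closure of `x₀`, and `‖Tⁿ x - Tⁿ x₀‖ ≤ M ‖x - x₀‖ → 0`, so `Tⁿ x`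
has the same weak limit. In a regular space, a set on which every ultrafilter converges has
compact closure.
-/

open Filter Topology

variable {X : Type*} [NormedAddCommGroup X] [NormedSpace ℂ X]

/-- An operator has relatively weakly compact orbits if every orbit `{Tⁿx : n ∈ ℕ}` is
relatively compact in the weak topology of `X`. -/
def RelWeaklyCompactOrbits (T : X →L[ℂ] X) : Prop :=
  ∀ x : X, IsCompact (closure (Set.range fun n : ℕ => toWeakSpace ℂ X ((T ^ n) x)))

theorem isCompact_closure_image_of_ultrafilter_tendsto {α Y : Type*} [TopologicalSpace Y]
    [RegularSpace Y] {f : α → Y} {s : Set α}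
    (h : ∀ 𝒱 : Ultrafilter α, s ∈ 𝒱 → ∃ y, Tendsto f 𝒱 (𝓝 y)) :
    IsCompact (closure (f '' s)) := by
  rw [isCompact_iff_ultrafilter_le_nhds']
  intro 𝒢 h𝒢
  obtain ⟨-, a, -, -⟩ := closure_nonempty_iff.1 (Ultrafilter.nonempty_of_mem h𝒢)
  have hlift : ∀ y ∈ closure (f '' s), ∃ 𝒱 : Ultrafilter α, s ∈ 𝒱 ∧ Tendsto f 𝒱 (𝓝 y) := by
    intro y hy
    obtain ⟨𝒰, hs𝒰, hy𝒰⟩ := mem_closure_iff_ultrafilter.1 hy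
    refine ⟨.ofComapInfPrincipal hs𝒰, Ultrafilter.ofComapInfPrincipal_mem hs𝒰, ?_⟩
    rwa [Tendsto, ← Ultrafilter.coe_map, Ultrafilter.ofComapInfPrincipal_eq_of_map]
  have : Nonempty α := ⟨a⟩
  choose! 𝒱 hs𝒱 hf𝒱 using hlift
  -- The diagonal ultrafilter `𝒢.bind 𝒱` lives on `s`; regularity lets the closed neighbourhoods
  -- of its limit pass back to `𝒢`.
  have mem_bind : ∀ t, t ∈ 𝒢.bind 𝒱 ↔ {y | t ∈ 𝒱 y} ∈ 𝒢 := fun t => Iff.rfl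
  obtain ⟨x, hx⟩ := h (𝒢.bind 𝒱) ((mem_bind s).2 (mem_of_superset h𝒢 hs𝒱))
  refine ⟨x, mem_closure_of_tendsto hx ((mem_bind _).2 (mem_of_superset h𝒢 fun y hy => ?_)), ?_⟩
  · exact mem_of_superset (hs𝒱 y hy) (Set.subset_preimage_image f s)
  · refine (closed_nhds_basis x).ge_iff.2 fun V ⟨hVx, hVc⟩ => ?_
    filter_upwards [h𝒢, (mem_bind _).1 (hx hVx)] with y hy hVy
    exact hVc.mem_of_tendsto (hf𝒱 y hy) hVy

theorem tendsto_toWeakSpace_of_tendsto_sub {𝕜 E α : Type*} [CommRing 𝕜] [TopologicalSpace 𝕜]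
    [IsTopologicalRing 𝕜] [AddCommGroup E] [Module 𝕜 E] [TopologicalSpace E]
    [IsTopologicalAddGroup E] {l : Filter α} {u v : α → E} {z : WeakSpace 𝕜 E}
    (huv : Tendsto (u - v) l (𝓝 0)) (hv : Tendsto (fun a => toWeakSpace 𝕜 E (v a)) l (𝓝 z)) :
    Tendsto (fun a => toWeakSpace 𝕜 E (u a)) l (𝓝 z) := by
  have := ((toWeakSpaceCLM 𝕜 E).continuous.tendsto 0).comp huv
  simpa using hv.add this

theorem isBounded_preimage_toWeakSpace_of_isCompact {𝕜 E : Type*} [RCLike 𝕜]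
    [NormedAddCommGroup E] [NormedSpace 𝕜 E] {S : Set (WeakSpace 𝕜 E)} (hS : IsCompact S) :
    Bornology.IsBounded (toWeakSpace 𝕜 E ⁻¹' S) := by
  have hj : Bornology.IsBounded (NormedSpace.inclusionInDoubleDualWeak 𝕜 E '' S) :=
    WeakDual.isBounded_iff_isVonNBounded.2
      (IsCompact.isVonNBounded (𝕜 := 𝕜) <|
        hS.image (NormedSpace.inclusionInDoubleDualWeak 𝕜 E).continuous)
  rw [← WeakDual.isBounded_toWeakDual_preimage_iff_isBounded,
    isBounded_iff_forall_norm_le] at hj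
  obtain ⟨C, hC⟩ := hj
  refine isBounded_iff_forall_norm_le.2 ⟨C, fun x hx => ?_⟩
  rw [← (NormedSpace.inclusionInDoubleDualLi 𝕜).norm_map x]
  exact hC _ ⟨x, hx, rfl⟩

namespace RelWeaklyCompactOrbits

variable {T : X →L[ℂ] X}

theorem exists_norm_pow_le [CompleteSpace X] (hT : RelWeaklyCompactOrbits T) :
    ∃ M, ∀ n : ℕ, ‖T ^ n‖ ≤ M :=
  banach_steinhaus fun x => by
    obtain ⟨C, hC⟩ := isBounded_iff_forall_norm_le.1
      (isBounded_preimage_toWeakSpace_of_isCompact (hT x))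
    exact ⟨C, fun n => hC ((T ^ n) x) (Set.mem_preimage.2 (subset_closure ⟨n, rfl⟩))⟩

theorem exists_tendsto_of_ultrafilter (hT : RelWeaklyCompactOrbits T) {M : ℝ}
    (hM : ∀ n : ℕ, ‖T ^ n‖ ≤ M) {K : Set X} (hK : IsCompact K) (𝒱 : Ultrafilter (ℕ × X))
    (hK𝒱 : Prod.snd ⁻¹' K ∈ 𝒱) :
    ∃ z, Tendsto (fun p : ℕ × X => toWeakSpace ℂ X ((T ^ p.1) p.2)) 𝒱 (𝓝 z) := by
  obtain ⟨x₀, -, hx₀⟩ := hK.ultrafilter_le_nhds' (𝒱.map Prod.snd) hK𝒱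
  obtain ⟨z, -, hz⟩ := (hT x₀).ultrafilter_le_nhds'
    (𝒱.map fun p : ℕ × X => toWeakSpace ℂ X ((T ^ p.1) x₀))
    (mem_map.2 <| univ_mem' fun p => subset_closure ⟨p.1, rfl⟩)
  refine ⟨z, tendsto_toWeakSpace_of_tendsto_sub ?_ hz⟩
  have hdist : Tendsto (fun p : ℕ × X => M * ‖p.2 - x₀‖) 𝒱 (𝓝 0) := by
    simpa using (tendsto_iff_norm_sub_tendsto_zero.1 hx₀).const_mul M
  refine squeeze_zero_norm (fun p => ?_) hdist
  calc ‖(T ^ p.1) p.2 - (T ^ p.1) x₀‖ = ‖(T ^ p.1) (p.2 - x₀)‖ := by rw [map_sub]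
    _ ≤ ‖T ^ p.1‖ * ‖p.2 - x₀‖ := (T ^ p.1).le_opNorm _
    _ ≤ M * ‖p.2 - x₀‖ := by gcongr; exact hM p.1

end RelWeaklyCompactOrbits

/-- If `T` has relatively weakly compact orbits and `K` is relatively norm compact, then
`Orb(K) = {Tⁿ x : n ∈ ℕ, x ∈ K}` is relatively weakly compact. -/
theorem orbit_of_relCompact_relWeaklyCompact
    [CompleteSpace X] (T : X →L[ℂ] X) (hT : RelWeaklyCompactOrbits T)
    (K : Set X) (hK : IsCompact (closure K)) :
    IsCompact (closure (toWeakSpace ℂ X '' (⋃ n : ℕ, (T ^ n) '' K))) := by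
  obtain ⟨M, hM⟩ := hT.exists_norm_pow_le
  have hOrb : toWeakSpace ℂ X '' (⋃ n : ℕ, (T ^ n) '' K) =
      (fun p : ℕ × X => toWeakSpace ℂ X ((T ^ p.1) p.2)) '' (Prod.snd ⁻¹' K) := by
    ext; simp
  rw [hOrb]
  exact isCompact_closure_image_of_ultrafilter_tendsto fun 𝒱 h𝒱 =>
    hT.exists_tendsto_of_ultrafilter hM hK 𝒱 (mem_of_superset h𝒱 fun p hp => subset_closure hp)
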